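/- With the setup above, if s* ∈ S^b satisfies γ(s*) ≥ γ(s) for all s ∈ S^b and γ(s*) ≥ c(p^b), then γ(s*) ≥ γ(s) for all s ∈ S, i.e. s* is a global maximizer of γ. -/

import Mathlib

theorem stmt_1_general {S H : Type} (m : ℕ)
    (η : Fin m → S → H) (p : Fin m → H → ℝ)
    (c : (Fin m → ℝ) → ℝ)
    (hc : ∀ ρ ρ' : Fin m → ℝ, (∀ j, ρ' j ≤ ρ j) → c ρ' ≤ c ρ)
    (pb : Fin m → ℝ)
    (γ : S → ℝ) (hγ : ∀ s, γ s = c (fun j => p j (η j s)))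
    (sstar : S)
    (hbest : ∀ s : S, (∃ j, pb j ≤ p j (η j s)) → γ s ≤ γ sstar)
    (hcert : c pb ≤ γ sstar) :
    ∀ s : S, γ s ≤ γ sstar := by
  intro s
  by_cases hs : ∃ j, pb j ≤ p j (η j s)
  · exact hbest s hs
  · -- off `S^b` every score is below its threshold, so monotonicity of `c` bounds `γ s` by `c pb`
    push Not at hs
    calc γ s = c (fun j => p j (η j s)) := hγ s
      _ ≤ c pb := hc pb _ fun j => (hs j).le
      _ ≤ γ sstar := hcert

/-- Beam-search early-termination certificate: if `s*` maximizes `γ` over the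
candidate set `S^b` and `γ(s*) ≥ c(p^b)`, then `s*` is a global maximizer. -/
theorem stmt_1 {S H : Type} (m : ℕ)
    (η : Fin m → S → H) (p : Fin m → H → ℝ)
    (c : (Fin m → ℝ) → ℝ)
    (hc : ∀ ρ ρ' : Fin m → ℝ, (∀ j, ρ' j ≤ ρ j) → c ρ' ≤ c ρ)
    (pb : Fin m → ℝ)
    (γ : S → ℝ) (hγ : ∀ s, γ s = c (fun j => p j (η j s)))
    (sstar : S)
    (hmem : ∃ j, pb j ≤ p j (η j sstar))
    (hbest : ∀ s : S, (∃ j, pb j ≤ p j (η j s)) → γ s ≤ γ sstar)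
    (hcert : c pb ≤ γ sstar) :
    ∀ s : S, γ s ≤ γ sstar :=
  stmt_1_general m η p c hc pb γ hγ sstar hbest hcert
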